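/- arXiv:1309.3715 — 7 statements merged into one kernel-verified Lean document; each statement's English description precedes it below -/
import Mathlib

section
/- If a, b, c, d are four distinct points of the projective line over a field F, then there exists exactly one involution in PGL(2,F) that interchanges a with c and interchanges b with d. -/
/-!
Choose representatives with `a = [u]`, `c = [v]`, `b = [u + v]`; then `d = [δ u + ε v]` with
`δ, ε ≠ 0` since `d ∉ {a, c}`, and the linear map `u ↦ ε v`, `v ↦ δ u` swaps `a ↔ c` and
`b ↔ d`. Conversely, a matrix fixing the three distinct points `[u]`, `[v]`, `[u + v]` is
scalar, i.e. trivial in `PGL(2, F)`. Applied to `g²` this shows that the swap `g` is an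
involution, and applied to `g⁻¹ g'` for any other swap `g'` it gives uniqueness.
-/

/-- The action of `GL(2, F)` on the projective line `ℙ¹(F)` induced by matrix-vector
multiplication. -/
noncomputable def glPointMap {F : Type*} [Field F] (g : GL (Fin 2) F) :
    Projectivization F (Fin 2 → F) → Projectivization F (Fin 2 → F) :=
  Projectivization.map ((g : Matrix (Fin 2) (Fin 2) F).mulVecLin)
    (Function.LeftInverse.injective (g := ((g⁻¹ : GL (Fin 2) F) :
        Matrix (Fin 2) (Fin 2) F).mulVecLin) (fun x => by
      have h1 : ((g : Matrix (Fin 2) (Fin 2) F))⁻¹ *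
          (g : Matrix (Fin 2) (Fin 2) F) = 1 := by
        rw [← Matrix.coe_units_inv]; exact_mod_cast g.inv_mul
      simp only [Matrix.mulVecLin_apply, Matrix.mulVec_mulVec, Matrix.coe_units_inv, h1,
        Matrix.one_mulVec]))

open scoped LinearAlgebra.Projectivization

namespace Projectivization

variable {K V : Type*} [Field K] [AddCommGroup V] [Module K V]

theorem linearIndependent_of_mk_ne {u v : V} {hu : u ≠ 0} {hv : v ≠ 0}
    (h : mk K u hu ≠ mk K v hv) : LinearIndependent K ![u, v] :=
  (independent_mk_iff_LinearIndependent hu hv).mp ((independent_pair_iff_ne _ _).mpr h)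

theorem exists_smul_add_smul_eq (hV : Module.finrank K V = 2) {u v : V}
    (huv : LinearIndependent K ![u, v]) (w : V) : ∃ α β : K, α • u + β • v = w := by
  have : FiniteDimensional K V := Module.finite_of_finrank_eq_succ hV
  have hspan := huv.span_eq_top_of_card_eq_finrank' (by simp [hV])
  rw [Matrix.range_cons, Matrix.range_cons, Matrix.range_empty, Set.union_empty,
    Set.singleton_union] at hspan
  exact Submodule.mem_span_pair.mp (hspan ▸ Submodule.mem_top)

theorem mk_smul_eq_mk {v : V} {α : K} (hαv : α • v ≠ 0) (hv : v ≠ 0) :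
    mk K (α • v) hαv = mk K v hv :=
  (mk_eq_mk_iff' K _ v hαv hv).mpr ⟨α, rfl⟩

theorem ne_zero_of_smul_add_smul_eq_of_mk_ne {u v w : V} {α β : K} (hw : w ≠ 0) (hv : v ≠ 0)
    (h : mk K w hw ≠ mk K v hv) (huvw : α • u + β • v = w) : α ≠ 0 := by
  rintro rfl
  rw [zero_smul, zero_add] at huvw
  exact h ((mk_eq_mk_iff' K w v hw hv).mpr ⟨β, huvw⟩)

theorem exists_mk_eq_mk_add (hV : Module.finrank K V = 2) {a b c : ℙ K V}
    (hab : a ≠ b) (hbc : b ≠ c) (hac : a ≠ c) :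
    ∃ (u v : V) (hu : u ≠ 0) (hv : v ≠ 0) (huv : u + v ≠ 0),
      mk K u hu = a ∧ mk K v hv = c ∧ mk K (u + v) huv = b := by
  obtain ⟨α, β, hb⟩ := exists_smul_add_smul_eq hV (linearIndependent_pair_iff_ne.mpr hac) b.rep
  have hα : α ≠ 0 := ne_zero_of_smul_add_smul_eq_of_mk_ne b.rep_nonzero c.rep_nonzero
    (by rwa [mk_rep, mk_rep]) hb
  have hβ : β ≠ 0 := ne_zero_of_smul_add_smul_eq_of_mk_ne b.rep_nonzero a.rep_nonzero
    (by rwa [mk_rep, mk_rep, ne_comm]) (by rw [add_comm, hb])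
  refine ⟨α • a.rep, β • c.rep, smul_ne_zero hα a.rep_nonzero, smul_ne_zero hβ c.rep_nonzero,
    hb ▸ b.rep_nonzero, ?_, ?_, ?_⟩
  · rw [mk_smul_eq_mk _ a.rep_nonzero, mk_rep]
  · rw [mk_smul_eq_mk _ c.rep_nonzero, mk_rep]
  · simp_rw [hb, mk_rep]

theorem exists_linearEquiv_swap (hV : Module.finrank K V = 2) {a b c d : ℙ K V}
    (hab : a ≠ b) (hac : a ≠ c) (had : a ≠ d) (hbc : b ≠ c) (hcd : c ≠ d) :
    ∃ e : V ≃ₗ[K] V, e • a = c ∧ e • c = a ∧ e • b = d ∧ e • d = b := by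
  obtain ⟨u, v, hu, hv, huv, rfl, rfl, rfl⟩ := exists_mk_eq_mk_add hV hab hbc hac
  induction d using ind with | h x hx => ?_
  have hli := linearIndependent_of_mk_ne hac
  obtain ⟨δ, ε, rfl⟩ := exists_smul_add_smul_eq hV hli x
  have hδ : δ ≠ 0 := ne_zero_of_smul_add_smul_eq_of_mk_ne hx hv hcd.symm rfl
  have hε : ε ≠ 0 := ne_zero_of_smul_add_smul_eq_of_mk_ne hx hu had.symm (add_comm _ _)
  let B := basisOfLinearIndependentOfCardEqFinrank hli (by simp [hV])
  have hB : ⇑B = ![u, v] := coe_basisOfLinearIndependentOfCardEqFinrank _ _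
  let B' := B.unitsSMul ![Units.mk0 δ hδ, Units.mk0 ε hε]
  let e := B.equiv B' (Equiv.swap 0 1)
  have heu : e u = ε • v := by
    simpa [hB, B', Module.Basis.unitsSMul_apply] using B.equiv_apply 0 B' (Equiv.swap 0 1)
  have hev : e v = δ • u := by
    simpa [hB, B', Module.Basis.unitsSMul_apply] using B.equiv_apply 1 B' (Equiv.swap 0 1)
  refine ⟨e, ?_, ?_, ?_, ?_⟩ <;> simp only [smul_mk, mk_eq_mk_iff', LinearEquiv.smul_def]
  · exact ⟨ε, heu.symm⟩
  · exact ⟨δ, hev.symm⟩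
  · exact ⟨1, by rw [map_add, heu, hev, one_smul, add_comm]⟩
  · exact ⟨δ * ε, by rw [map_add, map_smul, map_smul, heu, hev]; module⟩

section Action

variable {G : Type*} [Group G] [DistribMulAction G V] [SMulCommClass G K V]

theorem exists_smul_eq_smul_of_smul_eq_self (hV : Module.finrank K V = 2) {g : G}
    {a b c : ℙ K V} (hab : a ≠ b) (hbc : b ≠ c) (hac : a ≠ c)
    (ha : g • a = a) (hb : g • b = b) (hc : g • c = c) :
    ∃ p : K, ∀ x : V, g • x = p • x := by
  obtain ⟨u, v, hu, hv, huv, rfl, rfl, rfl⟩ := exists_mk_eq_mk_add hV hab hbc hac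
  have hli := linearIndependent_of_mk_ne hac
  rw [smul_mk, mk_eq_mk_iff'] at ha hb hc
  obtain ⟨p, hp⟩ := ha
  obtain ⟨q, hq⟩ := hc
  obtain ⟨r, hr⟩ := hb
  obtain ⟨hpr, hqr⟩ := LinearIndependent.pair_iff.mp hli (p - r) (q - r) (by
    calc (p - r) • u + (q - r) • v = p • u + q • v - r • (u + v) := by module
      _ = 0 := by rw [hp, hq, hr, smul_add, sub_self])
  refine ⟨p, fun x => ?_⟩
  obtain ⟨α, β, rfl⟩ := exists_smul_add_smul_eq hV hli x
  rw [smul_add, smul_comm g α, smul_comm g β, ← hp, ← hq, sub_eq_zero.mp hpr,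
    sub_eq_zero.mp hqr]
  module

end Action

end Projectivization

namespace Matrix.GeneralLinearGroup

open Projectivization

variable {F : Type*} [Field F]

theorem glPointMap_eq_smul (g : GL (Fin 2) F) (x : ℙ F (Fin 2 → F)) :
    glPointMap g x = g • x :=
  rfl

theorem smul_eq_self_of_mem_center {n : Type*} [Fintype n] [DecidableEq n] {g : GL n F}
    (hg : g ∈ Subgroup.center (GL n F)) (x : ℙ F (n → F)) : g • x = x := by
  obtain ⟨p, hp⟩ := mem_center_iff_val_mem_range_scalar.mp hg
  induction x using ind with | h v hv => ?_
  rw [smul_mk, mk_eq_mk_iff']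
  exact ⟨p, by simp [Units.smul_def, ← hp]⟩

theorem smul_eq_smul_of_mk_eq {n : Type*} [Fintype n] [DecidableEq n] {g g' : GL n F}
    (h : (g : GL n F ⧸ Subgroup.center (GL n F)) = g') (x : ℙ F (n → F)) : g • x = g' • x := by
  rw [eq_comm, ← inv_smul_eq_iff, ← mul_smul]
  exact smul_eq_self_of_mem_center (QuotientGroup.eq.mp h) x

theorem mem_center_of_smul_eq_self {g : GL (Fin 2) F} {a b c : ℙ F (Fin 2 → F)}
    (hab : a ≠ b) (hbc : b ≠ c) (hac : a ≠ c) (ha : g • a = a) (hb : g • b = b) (hc : g • c = c) :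
    g ∈ Subgroup.center (GL (Fin 2) F) := by
  obtain ⟨p, hp⟩ := exists_smul_eq_smul_of_smul_eq_self (by simp) hab hbc hac ha hb hc
  refine mem_center_iff_val_mem_range_scalar.mpr ⟨p, Matrix.ext_iff_mulVec.mpr fun x => ?_⟩
  simpa [Units.smul_def] using (hp x).symm

theorem exists_smul_eq_linearEquiv_smul {n : Type*} [Fintype n] [DecidableEq n]
    (e : (n → F) ≃ₗ[F] (n → F)) : ∃ g : GL n F, ∀ x : ℙ F (n → F), g • x = e • x := by
  refine ⟨toLin.symm (LinearMap.GeneralLinearGroup.ofLinearEquiv e), fun x => ?_⟩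
  induction x using ind with | h v hv => ?_
  simp only [smul_mk]
  congr 1
  change ((toLin _ : LinearMap.GeneralLinearGroup F (n → F)) : (n → F) →ₗ[F] n → F) v = e v
  rw [MulEquiv.apply_symm_apply]
  rfl

end Matrix.GeneralLinearGroup

open Matrix.GeneralLinearGroup in
theorem stmt_0_general {F : Type*} [Field F]
    (a b c d : Projectivization F (Fin 2 → F))
    (hab : a ≠ b) (hac : a ≠ c) (had : a ≠ d) (hbc : b ≠ c) (hcd : c ≠ d) :
    ∃! z : GL (Fin 2) F ⧸ Subgroup.center (GL (Fin 2) F),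
      orderOf z = 2 ∧
        ∀ g : GL (Fin 2) F, (g : GL (Fin 2) F ⧸ Subgroup.center (GL (Fin 2) F)) = z →
          glPointMap g a = c ∧ glPointMap g c = a ∧
            glPointMap g b = d ∧ glPointMap g d = b := by
  simp only [glPointMap_eq_smul]
  obtain ⟨e, he⟩ := Projectivization.exists_linearEquiv_swap (by simp) hab hac had hbc hcd
  obtain ⟨g, hg⟩ := exists_smul_eq_linearEquiv_smul e
  simp only [← hg] at he
  obtain ⟨hga, hgc, hgb, hgd⟩ := he
  refine ⟨g, ⟨orderOf_eq_prime ?_ ?_, fun g' hg' => ?_⟩, ?_⟩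
  · rw [← QuotientGroup.mk_pow, QuotientGroup.eq_one_iff]
    exact mem_center_of_smul_eq_self hab hbc hac (by rw [sq, mul_smul, hga, hgc])
      (by rw [sq, mul_smul, hgb, hgd]) (by rw [sq, mul_smul, hgc, hga])
  · rw [Ne, QuotientGroup.eq_one_iff]
    exact fun hcen => hac (by rw [← smul_eq_self_of_mem_center hcen a, hga])
  · simp only [smul_eq_smul_of_mk_eq hg', hga, hgc, hgb, hgd, and_self]
  · rintro z ⟨-, hz⟩
    induction z using QuotientGroup.induction_on with | H g' => ?_
    obtain ⟨hg'a, hg'c, hg'b, -⟩ := hz g' rfl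
    rw [QuotientGroup.eq]
    exact mem_center_of_smul_eq_self hab hbc hac (by rw [mul_smul, hga, inv_smul_eq_iff, hg'a])
      (by rw [mul_smul, hgb, inv_smul_eq_iff, hg'b]) (by rw [mul_smul, hgc, inv_smul_eq_iff, hg'c])

/-- If `a, b, c, d` are four distinct points of the projective line over a field `F`,
then there is a unique involution in `PGL(2, F)` interchanging `a` with `c` and `b`
with `d`. -/
theorem stmt_0 {F : Type*} [Field F]
    (a b c d : Projectivization F (Fin 2 → F))
    (hab : a ≠ b) (hac : a ≠ c) (had : a ≠ d) (hbc : b ≠ c) (hbd : b ≠ d) (hcd : c ≠ d) :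
    ∃! z : GL (Fin 2) F ⧸ Subgroup.center (GL (Fin 2) F),
      orderOf z = 2 ∧
        ∀ g : GL (Fin 2) F, (g : GL (Fin 2) F ⧸ Subgroup.center (GL (Fin 2) F)) = z →
          glPointMap g a = c ∧ glPointMap g c = a ∧
            glPointMap g b = d ∧ glPointMap g d = b :=
  stmt_0_general a b c d hab hac had hbc hcd
end

section
/- Let G = PGL(2,q) with q > 2 even, write q² − 1 = 2k + 1, and let h ∈ G be a nontrivial element of odd order. If g ∈ G satisfies [h, h^g] ≠ 1, then either [h, h^g] is an involution or (h·h^g)^k · h is an involution. -/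
/-!
Lift to `SL(2, q)`, which maps isomorphically onto `PGL(2, q)` in characteristic 2. There
Cayley–Hamilton reads `A² = tr(A) A + 1`, so `A⁻¹ = tr(A) + A` and every `A` of trace 0 is an
involution. Let `A` lift `h`, `B = Aᵍ` and `T = AB`, `c = tr T`.
If `c = 0`, then `[A, B] = T (BA)` and its trace is `tr(A²B²) = 0`.
If `c ≠ 0`, then `T` has two distinct eigenvalues, both in `𝔽_{q²}` by Frobenius, so
`T ^ (q² - 1) = T ^ (2k + 1) = 1`. Hence `T · Tᵏ = (Tᵏ)⁻¹ = tr(Tᵏ) + Tᵏ`, and comparing with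
`T² = cT + 1` gives `c · tr(Tᵏ A) = 0`.
-/

open scoped MatrixGroups commutatorElement
open Matrix Polynomial

theorem FiniteField.pow_card_sq_eq_self_of_sq_add_mul_add_eq_zero {F K : Type*} [Field F]
    [Fintype F] [CommRing K] [IsDomain K] [Algebra F K] (b c : F) {x : K}
    (hx : x ^ 2 + algebraMap F K b * x + algebraMap F K c = 0) :
    x ^ Fintype.card F ^ 2 = x := by
  set φ := frobeniusAlgHom F K
  have hφx : φ x ^ 2 + algebraMap F K b * φ x + algebraMap F K c = 0 := by
    simpa only [map_add, map_mul, map_pow, AlgHom.commutes, map_zero] using congrArg φ hx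
  -- so `φ x` is either `x` or the other root `-x - b`, and in both cases `φ (φ x) = x`
  have hroots : (φ x - x) * (φ x + x + algebraMap F K b) = 0 := by
    linear_combination hφx - hx
  have hφφ : φ (φ x) = x := by
    rcases mul_eq_zero.1 hroots with h | h
    · rw [sub_eq_zero.1 h, sub_eq_zero.1 h]
    · have h' : φ x = -x - algebraMap F K b := by linear_combination h
      rw [h', map_sub, map_neg, AlgHom.commutes, h']
      ring
  rwa [sq, pow_mul]

theorem Polynomial.X_sub_C_mul_X_sub_C_dvd_X_pow_sub_X {K : Type*} [Field K] {a b : K}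
    (hab : a ≠ b) {n : ℕ} (ha : a ^ n = a) (hb : b ^ n = b) :
    (X - C a) * (X - C b) ∣ X ^ n - X :=
  (isCoprime_X_sub_C_of_isUnit_sub (sub_ne_zero.2 hab).isUnit).mul_dvd
    (dvd_iff_isRoot.2 (by simp [ha])) (dvd_iff_isRoot.2 (by simp [hb]))

theorem Matrix.pow_card_sq_eq_self {F : Type*} [Field F] [Fintype F]
    (T : Matrix (Fin 2) (Fin 2) F) (hT : T.discr ≠ 0) : T ^ Fintype.card F ^ 2 = T := by
  let K := AlgebraicClosure F
  obtain ⟨x, hx⟩ := IsAlgClosed.exists_aeval_eq_zero K T.charpoly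
    (by simp [charpoly_degree_eq_dim])
  set t := algebraMap F K T.trace
  set δ := algebraMap F K T.det
  replace hx : x ^ 2 - t * x + δ = 0 := by simpa [charpoly_fin_two] using hx
  have hroot : ∀ z : K, z ^ 2 - t * z + δ = 0 → z ^ Fintype.card F ^ 2 = z := fun z hz ↦
    FiniteField.pow_card_sq_eq_self_of_sq_add_mul_add_eq_zero (-T.trace) T.det
      (by rwa [map_neg, neg_mul, ← sub_eq_add_neg])
  have hsplit : (X - C x) * (X - C (t - x)) = T.charpoly.map (algebraMap F K) := by
    rw [charpoly_fin_two, Polynomial.map_add, Polynomial.map_sub, Polynomial.map_mul,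
      Polynomial.map_pow, map_X, map_C, map_C,
      show C δ = C x * C (t - x) by rw [← C_mul]; congr 1; linear_combination hx, map_sub]
    ring
  have hne : x ≠ t - x := by
    intro h
    apply hT
    apply (algebraMap F K).injective
    rw [discr_fin_two, map_zero, map_sub, map_pow, map_mul, map_ofNat]
    change t ^ 2 - 4 * δ = 0
    linear_combination (2 * x - t) * h - 4 * hx
  -- evaluate `X ^ q² - X = (X - x) (X - (t - x)) p` at `T` over `K`, using Cayley–Hamilton
  obtain ⟨p, hp⟩ := X_sub_C_mul_X_sub_C_dvd_X_pow_sub_X hne (hroot x hx)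
    (hroot _ (by linear_combination hx))
  have := congrArg (aeval (T.map (algebraMap F K))) hp
  rw [hsplit, ← charpoly_map, map_mul, aeval_self_charpoly, zero_mul, map_sub, map_pow, aeval_X,
    ← Matrix.map_pow] at this
  exact Matrix.map_injective (algebraMap F K).injective (sub_eq_zero.1 this)

namespace Matrix.SpecialLinearGroup

variable {R : Type*} [CommRing R]

local notation:1024 "↑ₘ" A:1024 => ((A : SL(2, R)) : Matrix (Fin 2) (Fin 2) R)

theorem trace_inv_mul_mul (G A : SL(2, R)) : trace ↑ₘ(G⁻¹ * A * G) = trace ↑ₘA := by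
  rw [coe_mul, coe_mul, trace_mul_cycle, ← coe_mul, mul_inv_cancel, coe_one, one_mul]

section CharTwo

variable [CharP R 2]

theorem coe_mul_self_of_charTwo (A : SL(2, R)) : ↑ₘA * ↑ₘA = trace ↑ₘA • ↑ₘA + 1 := by
  have : Nontrivial R := CharP.nontrivial_of_char_ne_one (v := 2) (by norm_num)
  have h := aeval_self_charpoly ↑ₘA
  rw [charpoly_fin_two, A.det_coe] at h
  simp only [map_add, map_sub, map_pow, Polynomial.aeval_X, map_mul, Polynomial.aeval_C,
    map_one] at h
  rw [← sub_eq_zero, ← h, sq, Algebra.smul_def, CharTwo.sub_eq_add, CharTwo.sub_eq_add, add_assoc]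

theorem coe_inv_of_charTwo (A : SL(2, R)) : ↑ₘA⁻¹ = trace ↑ₘA • 1 + ↑ₘA := by
  refine (left_inv_eq_right_inv (a := ↑ₘA) ?_ ?_).symm
  · rw [add_mul, smul_one_mul, coe_mul_self_of_charTwo, ← add_assoc, ← add_smul,
      CharTwo.add_self_eq_zero, zero_smul, zero_add]
  · rw [← coe_mul, mul_inv_cancel, coe_one]

theorem sq_eq_one_of_trace_eq_zero {A : SL(2, R)} (hA : trace ↑ₘA = 0) : A ^ 2 = 1 := by
  ext1
  rw [coe_pow, sq, coe_mul_self_of_charTwo, hA, zero_smul, zero_add, coe_one]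

theorem trace_commutator_eq_zero {A B : SL(2, R)} (htr : trace ↑ₘA = trace ↑ₘB)
    (hAB : trace ↑ₘ(A * B) = 0) : trace ↑ₘ⁅A, B⁆ = 0 := by
  have hBA : ↑ₘ(B * A)⁻¹ = ↑ₘ(B * A) := by
    rw [coe_inv_of_charTwo, coe_mul B, trace_mul_comm, ← coe_mul, hAB, zero_smul, zero_add]
  have hcycle : trace ↑ₘ⁅A, B⁆ = trace (↑ₘA * ↑ₘA * (↑ₘB * ↑ₘB)) := by
    rw [show ⁅A, B⁆ = A * B * (B * A)⁻¹ by group, coe_mul, hBA, coe_mul, coe_mul, ← mul_assoc,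
      trace_mul_comm]
    simp only [mul_assoc]
  rw [hcycle, coe_mul_self_of_charTwo, coe_mul_self_of_charTwo, ← htr]
  simp only [smul_mul_assoc, mul_smul_comm, add_mul, mul_add, one_mul, mul_one, trace_add,
    trace_smul, trace_one, smul_eq_mul, ← coe_mul, hAB, Fintype.card_fin, Nat.cast_ofNat,
    mul_zero, zero_add]
  linear_combination (trace ↑ₘA ^ 2 + 1) * CharTwo.two_eq_zero (R := R) - trace ↑ₘA * htr

theorem trace_pow_mul_eq_zero [NoZeroDivisors R] {A B : SL(2, R)} (htr : trace ↑ₘA = trace ↑ₘB)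
    (hAB : trace ↑ₘ(A * B) ≠ 0) {k : ℕ} (hk : (A * B) ^ (2 * k + 1) = 1) :
    trace ↑ₘ((A * B) ^ k * A) = 0 := by
  set T := A * B with hT
  set S := T ^ k
  set c := trace ↑ₘT
  set a := trace ↑ₘA
  set s := trace ↑ₘS
  have hTS : ↑ₘT * ↑ₘS = s • 1 + ↑ₘS := by
    have hinv : T * S = S⁻¹ := eq_inv_of_mul_eq_one_left <| by
      rw [← pow_succ', ← pow_add, ← hk]
      ring_nf
    rw [← coe_mul, hinv, coe_inv_of_charTwo]
  have hTA : trace (↑ₘT * ↑ₘA) = (c + 1) * a := by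
    rw [hT, coe_mul, trace_mul_comm, ← mul_assoc, coe_mul_self_of_charTwo, add_mul, one_mul,
      smul_mul_assoc, trace_add, trace_smul, ← coe_mul, ← htr, smul_eq_mul]
    ring
  have h1 : trace (↑ₘT * ↑ₘS * ↑ₘA) = s * a + trace (↑ₘS * ↑ₘA) := by
    rw [hTS, add_mul, smul_mul_assoc, one_mul, trace_add, trace_smul, smul_eq_mul]
  have h2 : trace (↑ₘT * ↑ₘT * ↑ₘS * ↑ₘA) = s * ((c + 1) * a) + trace (↑ₘT * ↑ₘS * ↑ₘA) := by
    conv_lhs => rw [mul_assoc ↑ₘT ↑ₘT, hTS, mul_add, mul_smul_comm, mul_one, add_mul,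
      smul_mul_assoc, trace_add, trace_smul, hTA, smul_eq_mul]
  have h3 : trace (↑ₘT * ↑ₘT * ↑ₘS * ↑ₘA) = c * trace (↑ₘT * ↑ₘS * ↑ₘA) + trace (↑ₘS * ↑ₘA) := by
    rw [coe_mul_self_of_charTwo, add_mul, add_mul, smul_mul_assoc, smul_mul_assoc, one_mul,
      trace_add, trace_smul, smul_eq_mul]
  have hcS : c * trace (↑ₘS * ↑ₘA) = 0 := by
    linear_combination (1 - c) * h1 + h2 - h3 + s * a * CharTwo.two_eq_zero (R := R)
  rw [coe_mul]
  exact (mul_eq_zero.1 hcS).resolve_left hAB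

theorem toPGL_injective_of_charTwo [NoZeroDivisors R] :
    Function.Injective (toPGL : SL(2, R) →* PGL(2, R)) := by
  refine (injective_iff_map_eq_one _).2 fun A hA ↦ ?_
  have hA' : A ∈ Subgroup.center SL(2, R) := by rw [← toPGL_ker]; exact hA
  obtain ⟨r, hr, hrA⟩ := mem_center_iff.1 hA'
  have hr1 : r + 1 = 0 := by
    rw [← pow_eq_zero_iff two_ne_zero, CharTwo.add_sq, show r ^ 2 = 1 by simpa using hr, one_pow,
      CharTwo.add_self_eq_zero]
  ext1
  rw [← hrA, eq_neg_of_add_eq_zero_left hr1, CharTwo.neg_eq, map_one, coe_one]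

end CharTwo

section FiniteField

variable {F : Type*} [Field F] [Fintype F] [CharP F 2]

theorem pow_card_sq_sub_one_eq_one {T : SL(2, F)}
    (hT : trace (T : Matrix (Fin 2) (Fin 2) F) ≠ 0) : T ^ (Fintype.card F ^ 2 - 1) = 1 := by
  have hdisc : (T : Matrix (Fin 2) (Fin 2) F).discr ≠ 0 := by
    have h4 : (4 : F) = 0 := by
      rw [show (4 : F) = 2 * 2 by norm_num, CharTwo.two_eq_zero, zero_mul]
    rw [discr_fin_two, h4, zero_mul, sub_zero]
    exact pow_ne_zero 2 hT
  refine mul_right_cancel (b := T) ?_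
  ext1
  rw [← pow_succ, Nat.sub_add_cancel (Nat.one_le_pow _ _ Fintype.card_pos), coe_pow,
    pow_card_sq_eq_self _ hdisc, one_mul]

theorem toPGL_surjective_of_charTwo : Function.Surjective (toPGL : SL(2, F) →* PGL(2, F)) := by
  have hroots : ∀ r : Fˣ, ∃ k : Fˣ, k ^ Fintype.card (Fin 2) = r := fun r ↦ by
    obtain ⟨y, hy⟩ := FiniteField.isSquare_of_char_two (ringChar.eq F 2) (r : F)
    have hy0 : y ≠ 0 := by rintro rfl; simp at hy
    exact ⟨Units.mk0 y hy0, by ext; simp [hy, sq]⟩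
  exact (ProjectiveSpecialLinearGroup.toPGL_surj_of_roots hroots).comp QuotientGroup.mk_surjective

theorem sq_commutator_eq_one_or_sq_pow_mul_eq_one {k : ℕ}
    (hk : 2 * k + 1 = Fintype.card F ^ 2 - 1) {A B : SL(2, F)}
    (htr : trace (A : Matrix (Fin 2) (Fin 2) F) = trace (B : Matrix (Fin 2) (Fin 2) F)) :
    ⁅A, B⁆ ^ 2 = 1 ∨ ((A * B) ^ k * A) ^ 2 = 1 := by
  by_cases hc : trace ((A * B : SL(2, F)) : Matrix (Fin 2) (Fin 2) F) = 0
  · exact .inl (sq_eq_one_of_trace_eq_zero (trace_commutator_eq_zero htr hc))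
  · exact .inr (sq_eq_one_of_trace_eq_zero
      (trace_pow_mul_eq_zero htr hc (hk ▸ pow_card_sq_sub_one_eq_one hc)))

end FiniteField

end Matrix.SpecialLinearGroup

theorem commute_of_pow_mul_mul_eq_one {G : Type*} [Group G] {x y : G} {k : ℕ}
    (h : (x * y) ^ k * x = 1) : Commute x y := by
  have hxy : Commute x (x * y) := by
    have := ((Commute.refl (x * y)).pow_left k).inv_left
    rwa [← eq_inv_of_mul_eq_one_right h] at this
  simpa using (Commute.refl x).inv_right.mul_right hxy

open Matrix.SpecialLinearGroup in
theorem Matrix.ProjGenLinGroup.orderOf_commutator_conj_eq_two_or {F : Type*} [Field F] [Fintype F]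
    [CharP F 2] {k : ℕ} (hk : 2 * k + 1 = Fintype.card F ^ 2 - 1) (h g : PGL(2, F))
    (hcomm : ⁅h, g⁻¹ * h * g⁆ ≠ 1) :
    orderOf ⁅h, g⁻¹ * h * g⁆ = 2 ∨ orderOf ((h * (g⁻¹ * h * g)) ^ k * h) = 2 := by
  obtain ⟨A, rfl⟩ := toPGL_surjective_of_charTwo h
  obtain ⟨G, rfl⟩ := toPGL_surjective_of_charTwo g
  rw [← map_inv, ← map_mul, ← map_mul, ← map_commutatorElement] at hcomm ⊢
  rw [← map_mul, ← map_pow, ← map_mul, orderOf_injective _ toPGL_injective_of_charTwo,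
    orderOf_injective _ toPGL_injective_of_charTwo]
  have hAB : ⁅A, G⁻¹ * A * G⁆ ≠ 1 := fun h1 ↦ hcomm (by rw [h1, map_one])
  rcases sq_commutator_eq_one_or_sq_pow_mul_eq_one hk (trace_inv_mul_mul G A).symm with h2 | h2
  · exact .inl (orderOf_eq_prime h2 hAB)
  · refine .inr (orderOf_eq_prime h2 fun h1 ↦ hAB ?_)
    exact commutatorElement_eq_one_iff_commute.2 (commute_of_pow_mul_mul_eq_one h1)

theorem stmt_3_general {F : Type*} [Field F] [Fintype F] (e : ℕ)
    (hF : Fintype.card F = 2 ^ e) (k : ℕ) (hk : 2 * k + 1 = Fintype.card F ^ 2 - 1)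
    (h g : GL (Fin 2) F ⧸ Subgroup.center (GL (Fin 2) F))
    (hcomm : ⁅h, g⁻¹ * h * g⁆ ≠ 1) :
    orderOf ⁅h, g⁻¹ * h * g⁆ = 2 ∨ orderOf ((h * (g⁻¹ * h * g)) ^ k * h) = 2 := by
  have : CharP F 2 := charP_of_card_eq_prime_pow hF
  exact Matrix.ProjGenLinGroup.orderOf_commutator_conj_eq_two_or hk h g hcomm

/-- In `G = PGL(2, q)` with `q = 2ᵉ > 2` and `2k + 1 = q² - 1`: if `h ≠ 1` has odd order
and `[h, hᵍ] ≠ 1`, then `[h, hᵍ]` or `(h·hᵍ)ᵏ·h` is an involution. -/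
theorem stmt_3 {F : Type*} [Field F] [Fintype F] (e : ℕ) (he : 2 ≤ e)
    (hF : Fintype.card F = 2 ^ e) (k : ℕ) (hk : 2 * k + 1 = Fintype.card F ^ 2 - 1)
    (h g : GL (Fin 2) F ⧸ Subgroup.center (GL (Fin 2) F))
    (hh1 : h ≠ 1) (hodd : Odd (orderOf h))
    (hcomm : ⁅h, g⁻¹ * h * g⁆ ≠ 1) :
    orderOf ⁅h, g⁻¹ * h * g⁆ = 2 ∨ orderOf ((h * (g⁻¹ * h * g)) ^ k * h) = 2 :=
  stmt_3_general e hF k hk h g hcomm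
end

section
/- Let F be a finite field of characteristic 2 and let h ∈ SL(2,F) be a matrix of odd order n > 1. Then h has a unique square root in SL(2,F) of odd order, namely h^{(n+1)/2}, and any element of SL(2,F) whose square is h generates the same cyclic subgroup as h. -/
/-!
In characteristic 2, Cayley–Hamilton shows that `g ∈ SL(2, F)` is an involution exactly when
its trace vanishes. If a square root `g` of `h` had even order `d`, the nontrivial involution
`g ^ (d / 2)` would be a transvection commuting with `g`, which forces `trace g = 0`, so `g ^ 2 = 1`
and `h = 1`. Hence every square root of `h` has odd order, and a square root of odd order is
`g = g ^ (n + 1) = h ^ ((n + 1) / 2)`, since `g` and `h = g ^ 2` have the same order `n`.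
-/

open Matrix
open scoped MatrixGroups

theorem Matrix.sq_fin_two_eq_trace_smul_sub_det {R : Type*} [CommRing R]
    (A : Matrix (Fin 2) (Fin 2) R) : A ^ 2 = A.trace • A - A.det • 1 := by
  ext i j
  fin_cases i <;> fin_cases j <;> simp [sq, mul_apply, trace_fin_two, det_fin_two] <;> ring

namespace Matrix.SpecialLinearGroup

section CharTwo

variable {R : Type*} [CommRing R] [CharP R 2]

theorem sq_eq_one_iff_trace_eq_zero (g : SL(2, R)) :
    g ^ 2 = 1 ↔ trace (g : Matrix (Fin 2) (Fin 2) R) = 0 := by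
  set A : Matrix (Fin 2) (Fin 2) R := (g : Matrix (Fin 2) (Fin 2) R)
  have hsq : ((g ^ 2 : SL(2, R)) : Matrix (Fin 2) (Fin 2) R) = A.trace • A + 1 := by
    rw [coe_pow, sq_fin_two_eq_trace_smul_sub_det, g.det_coe, one_smul, sub_eq_add_neg,
      CharTwo.neg_eq]
  constructor
  · intro h
    have hsmul : A.trace • A = 0 := by simpa [h] using hsq.symm
    have := congrArg (· * adjugate A) hsmul
    simpa [smul_mul_assoc, mul_adjugate, A, g.det_coe] using congrFun (congrFun this 0) 0
  · intro h
    ext i j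
    simp [hsq, h]

variable [NoZeroDivisors R]

/-- In characteristic 2 a nontrivial involution is a transvection `!![a, b; c, a]` with
`(b, c) ≠ 0`, and commuting with it forces the diagonal entries of `y` to agree. -/
theorem trace_eq_zero_of_commute {x y : SL(2, R)} (hx : x ^ 2 = 1) (hx1 : x ≠ 1)
    (hxy : Commute x y) : trace (y : Matrix (Fin 2) (Fin 2) R) = 0 := by
  have two : (2 : R) = 0 := CharTwo.two_eq_zero
  have htx := (sq_eq_one_iff_trace_eq_zero x).mp hx
  have hdet := x.det_coe
  have hc := congrArg (fun A : SL(2, R) => (A : Matrix (Fin 2) (Fin 2) R)) hxy.eq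
  simp only [coe_mul] at hc
  have hc01 := congrFun (congrFun hc 0) 1
  have hc10 := congrFun (congrFun hc 1) 0
  simp only [mul_apply, Fin.sum_univ_two] at hc01 hc10
  rw [trace_fin_two] at htx ⊢
  rw [det_fin_two] at hdet
  by_contra hy
  have h01 : x 0 1 = 0 := by
    refine (mul_eq_zero.mp ?_).resolve_right hy
    linear_combination hc01 + y 0 1 * htx + (x 0 1 * y 0 0 - x 0 0 * y 0 1) * two
  have h10 : x 1 0 = 0 := by
    refine (mul_eq_zero.mp ?_).resolve_right hy
    linear_combination hc10 + y 1 0 * htx + (x 1 0 * y 1 1 - x 1 1 * y 1 0) * two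
  have h11 : x 1 1 = x 0 0 := by linear_combination htx - x 0 0 * two
  have h00 : x 0 0 = 1 := by
    have hsq : x 0 0 ^ 2 = 1 := by linear_combination hdet - x 0 0 * h11 + x 1 0 * h01
    rcases sq_eq_one_iff.mp hsq with h | h
    · exact h
    · rwa [CharTwo.neg_eq] at h
  refine hx1 (ext _ _ fun i j => ?_)
  fin_cases i <;> fin_cases j <;> simp [h00, h01, h10, h11]

theorem sq_eq_one_of_even_orderOf {g : SL(2, R)} (hg : IsOfFinOrder g)
    (heven : Even (orderOf g)) : g ^ 2 = 1 := by
  obtain ⟨k, hk⟩ := heven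
  have hk0 : k ≠ 0 := by have := hg.orderOf_pos; omega
  refine (sq_eq_one_iff_trace_eq_zero g).mpr (trace_eq_zero_of_commute (x := g ^ k) ?_ ?_ ?_)
  · rw [← pow_mul, mul_comm, two_mul, ← hk, pow_orderOf_eq_one]
  · exact pow_ne_one_of_lt_orderOf hk0 (by omega)
  · exact Commute.pow_left (Commute.refl g) k

end CharTwo

end Matrix.SpecialLinearGroup

section OddOrder

variable {M : Type*} [Monoid M] {g h : M}

theorem pow_orderOf_add_one_div_two_sq (hodd : Odd (orderOf h)) :
    (h ^ ((orderOf h + 1) / 2)) ^ 2 = h := by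
  obtain ⟨m, hm⟩ := hodd
  rw [← pow_mul, (by omega : (orderOf h + 1) / 2 * 2 = orderOf h + 1), pow_succ,
    pow_orderOf_eq_one, one_mul]

theorem Odd.orderOf_pow (hodd : Odd (orderOf h)) (k : ℕ) : Odd (orderOf (h ^ k)) :=
  hodd.of_dvd_nat (orderOf_pow_dvd k)

theorem eq_pow_orderOf_add_one_div_two_of_sq_eq (hg : g ^ 2 = h) (hodd : Odd (orderOf g)) :
    g = h ^ ((orderOf h + 1) / 2) := by
  have horder : orderOf h = orderOf g := hg ▸ Nat.Coprime.orderOf_pow hodd.coprime_two_right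
  obtain ⟨m, hm⟩ := hodd
  calc g = g ^ (orderOf g + 1) := by rw [pow_succ, pow_orderOf_eq_one, one_mul]
    _ = (g ^ 2) ^ ((orderOf h + 1) / 2) := by rw [← pow_mul, horder]; congr 1; omega
    _ = h ^ ((orderOf h + 1) / 2) := by rw [hg]

end OddOrder

theorem stmt_5_general {F : Type*} [Field F] [Fintype F] (e : ℕ)
    (hF : Fintype.card F = 2 ^ e)
    (h : Matrix.SpecialLinearGroup (Fin 2) F)
    (hodd : Odd (orderOf h)) (hgt : 1 < orderOf h) :
    (h ^ ((orderOf h + 1) / 2)) ^ 2 = h ∧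
    Odd (orderOf (h ^ ((orderOf h + 1) / 2))) ∧
    (∀ g : Matrix.SpecialLinearGroup (Fin 2) F,
      g ^ 2 = h → Odd (orderOf g) → g = h ^ ((orderOf h + 1) / 2)) ∧
    (∀ g : Matrix.SpecialLinearGroup (Fin 2) F,
      g ^ 2 = h → Subgroup.zpowers g = Subgroup.zpowers h) := by
  have : CharP F 2 := charP_of_card_eq_prime_pow hF
  have hsqrt_odd : ∀ g : SL(2, F), g ^ 2 = h → Odd (orderOf g) := fun g hg ↦
    Nat.not_even_iff_odd.mp fun heven ↦ by
      rw [← hg, SpecialLinearGroup.sq_eq_one_of_even_orderOf (isOfFinOrder_of_finite g) heven,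
        orderOf_one] at hgt
      exact lt_irrefl 1 hgt
  refine ⟨pow_orderOf_add_one_div_two_sq hodd, hodd.orderOf_pow _,
    fun g hg hg_odd ↦ eq_pow_orderOf_add_one_div_two_of_sq_eq hg hg_odd, fun g hg ↦ ?_⟩
  have hg_eq := eq_pow_orderOf_add_one_div_two_of_sq_eq hg (hsqrt_odd g hg)
  exact le_antisymm (Subgroup.zpowers_le.mpr (hg_eq ▸ Subgroup.npow_mem_zpowers h _))
    (Subgroup.zpowers_le.mpr (hg ▸ Subgroup.npow_mem_zpowers g 2))

/-- An element `h` of odd order `n > 1` in `SL(2, F₂ᵉ)` has `h ^ ((n+1)/2)` as its unique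
square root of odd order, and any square root of `h` generates the same cyclic subgroup. -/
theorem stmt_5 {F : Type*} [Field F] [Fintype F] (e : ℕ) (he : 0 < e)
    (hF : Fintype.card F = 2 ^ e)
    (h : Matrix.SpecialLinearGroup (Fin 2) F)
    (hodd : Odd (orderOf h)) (hgt : 1 < orderOf h) :
    (h ^ ((orderOf h + 1) / 2)) ^ 2 = h ∧
    Odd (orderOf (h ^ ((orderOf h + 1) / 2))) ∧
    (∀ g : Matrix.SpecialLinearGroup (Fin 2) F,
      g ^ 2 = h → Odd (orderOf g) → g = h ^ ((orderOf h + 1) / 2)) ∧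
    (∀ g : Matrix.SpecialLinearGroup (Fin 2) F,
      g ^ 2 = h → Subgroup.zpowers g = Subgroup.zpowers h) :=
  stmt_5_general e hF h hodd hgt
end

section
/- Let F be a finite field with q = 2^e elements, e ≥ 1, u = [[1,0],[1,1]] ∈ SL(2,F), and let g = [[a,b],[c,d]] ∈ SL(2,F) satisfy [u, u^g] ≠ 1. Write q² − 1 = 2k + 1 and define B(g) = (u·u^g)^{k+1}·g⁻¹. Then b ≠ 0 and B(g) = [[1,0],[1 + (a+d)/b, 1]]. -/
/-! In characteristic `2` the matrix `P = u·uᵍ` has determinant `1` and trace `b²`, and `b ≠ 0`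
because for `b = 0` the conjugate `uᵍ` is lower unitriangular and commutes with `u`.
Then `S = b⁻¹(P + 1)` is a square root of `P` satisfying `S² = bS + 1`, and every solution of
this equation is fixed by `x ↦ x^(q²)`. Since `2(k + 1) = q²`, this gives `(u·uᵍ)^(k+1) = S`, and
`B(g) = S g⁻¹ = b⁻¹(u g⁻¹ u + g⁻¹)` is read off entrywise. -/

open scoped commutatorElement
open Finset

namespace CharTwo

variable {K R : Type*} [CommRing K] [CharP K 2] [Ring R] [Algebra K R]

theorem pow_two_pow_of_sq_eq_add_algebraMap {x : R} {γ : K}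
    (hx : x ^ 2 = x + algebraMap K R γ) (n : ℕ) :
    x ^ 2 ^ n = x + algebraMap K R (∑ i ∈ range n, γ ^ 2 ^ i) := by
  induction n with
  | zero => simp
  | succ n ih =>
    have h2 : (2 : R) = 0 := by
      rw [← map_ofNat (algebraMap K R) 2, two_eq_zero, map_zero]
    have hsq : (∑ i ∈ range n, γ ^ 2 ^ i) ^ 2 = ∑ i ∈ range n, γ ^ 2 ^ (i + 1) := by
      rw [sum_pow_char]
      simp only [← pow_mul, ← pow_succ]
    rw [pow_succ, pow_mul, ih, (Algebra.commute_algebraMap_right _ x).add_sq, hx, h2,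
      sum_range_succ', ← map_pow, hsq]
    simp only [zero_mul, add_zero, pow_zero, pow_one, map_add]
    abel

end CharTwo

namespace FiniteField

variable {K : Type*} [Field K] [Fintype K] [CharP K 2]

theorem sum_range_two_mul_pow_two_pow_eq_zero {e : ℕ} (hK : Fintype.card K = 2 ^ e) (γ : K) :
    ∑ i ∈ range (2 * e), γ ^ 2 ^ i = 0 := by
  simp only [two_mul, sum_range_add, pow_add, pow_mul, ← hK, pow_card, CharTwo.add_self_eq_zero]

/-- Over `𝔽_q`, `q = 2 ^ e`, with `t ≠ 0`, rescaling `x² = t x + 1` to the Artin–Schreier form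
`y² = y + t⁻²` gives `y^(2^n) = y + ∑_{i<n} t^(-2^(i+1))`, and the sum vanishes for `n = 2e`. -/
theorem pow_card_sq_eq_self_of_sq_eq_smul_add_one {R : Type*} [Ring R] [Algebra K R] {x : R}
    {t : K} (ht : t ≠ 0) (hx : x ^ 2 = t • x + 1) : x ^ (Fintype.card K ^ 2) = x := by
  obtain ⟨e, -, hK⟩ := FiniteField.card K 2
  have hy : (t⁻¹ • x) ^ 2 = t⁻¹ • x + algebraMap K R (t⁻¹ ^ 2) := by
    rw [smul_pow, hx, smul_add, smul_smul, Algebra.algebraMap_eq_smul_one]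
    congr 2
    field_simp
  have hq : Fintype.card K ^ 2 = 2 ^ (2 * (e : ℕ)) := by rw [hK, ← pow_mul, mul_comm]
  calc x ^ (Fintype.card K ^ 2) = (t • t⁻¹ • x) ^ (Fintype.card K ^ 2) := by
        rw [smul_smul, mul_inv_cancel₀ ht, one_smul]
    _ = t • t⁻¹ • x := by
        rw [smul_pow, pow_card_pow, hq, CharTwo.pow_two_pow_of_sq_eq_add_algebraMap hy,
          sum_range_two_mul_pow_two_pow_eq_zero hK, map_zero, add_zero]
    _ = x := by rw [smul_smul, mul_inv_cancel₀ ht, one_smul]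

end FiniteField

namespace Matrix

variable {K : Type*} [Field K]

theorem sq_eq_trace_smul_sub_det_smul_one {R : Type*} [CommRing R]
    (M : Matrix (Fin 2) (Fin 2) R) :
    M ^ 2 = M.trace • M - M.det • 1 := by
  ext i j
  fin_cases i <;> fin_cases j <;>
    simp [sq, mul_apply, Fin.sum_univ_two, trace_fin_two, det_fin_two] <;> ring

/-- In characteristic `2`, a matrix of determinant `1` and trace `τ²` has the square root
`τ⁻¹ (P + 1)`: indeed `(P + 1)² = P² + 1 = τ² P` by Cayley–Hamilton. -/
theorem sq_inv_smul_add_one_eq_self [CharP K 2] {P : Matrix (Fin 2) (Fin 2) K} {τ : K}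
    (hτ : τ ≠ 0) (hdet : P.det = 1) (htr : P.trace = τ ^ 2) : (τ⁻¹ • (P + 1)) ^ 2 = P := by
  have h2 : (2 : Matrix (Fin 2) (Fin 2) K) = 0 := CharTwo.two_eq_zero
  rw [smul_pow, (Commute.one_right P).add_sq, h2, one_pow, zero_mul, zero_mul, add_zero,
    sq_eq_trace_smul_sub_det_smul_one, hdet, htr, one_smul, sub_add_cancel, smul_smul,
    inv_pow, inv_mul_cancel₀ (pow_ne_zero 2 hτ), one_smul]

theorem trace_unipotent_mul_conj {R : Type*} [CommRing R] (a b c d : R) :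
    (!![1, 0; 1, 1] * (!![d, -b; -c, a] * !![1, 0; 1, 1] * !![a, b; c, d])).trace =
      2 * (a * d - b * c) - b ^ 2 := by
  simp [trace_fin_two]
  ring

theorem commute_unipotent_conj_of_eq_zero {R : Type*} [CommRing R] {a b c d : R} (hb : b = 0) :
    Commute !![1, 0; 1, 1] (!![d, -b; -c, a] * !![1, 0; 1, 1] * !![a, b; c, d]) := by
  subst hb
  simp [Commute, SemiconjBy]
  ring

theorem inv_smul_unipotent_mul_adjugate_mul_unipotent_add [CharP K 2] {a b c d : K} (hb : b ≠ 0) :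
    b⁻¹ • (!![1, 0; 1, 1] * !![d, -b; -c, a] * !![1, 0; 1, 1] + !![d, -b; -c, a]) =
      !![1, 0; 1 + (a + d) / b, 1] := by
  ext i j
  fin_cases i <;> fin_cases j <;> simp [CharTwo.neg_eq] <;> field_simp <;> grind

end Matrix

theorem stmt_6_general {F : Type*} [Field F] [Fintype F] (e : ℕ)
    (hF : Fintype.card F = 2 ^ e) (k : ℕ) (hk : 2 * k + 1 = Fintype.card F ^ 2 - 1)
    (u g : Matrix.SpecialLinearGroup (Fin 2) F)
    (hu : (u : Matrix (Fin 2) (Fin 2) F) = !![1, 0; 1, 1])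
    (a b c d : F) (hg : (g : Matrix (Fin 2) (Fin 2) F) = !![a, b; c, d])
    (hcomm : ⁅u, g⁻¹ * u * g⁆ ≠ 1) :
    b ≠ 0 ∧
      (((u * (g⁻¹ * u * g)) ^ (k + 1) * g⁻¹ : Matrix.SpecialLinearGroup (Fin 2) F) :
          Matrix (Fin 2) (Fin 2) F) = !![1, 0; 1 + (a + d) / b, 1] := by
  have : Fact (Nat.Prime 2) := ⟨Nat.prime_two⟩
  have : CharP F 2 := charP_of_card_eq_prime_pow hF
  have hginv : ((g⁻¹ : Matrix.SpecialLinearGroup (Fin 2) F) : Matrix (Fin 2) (Fin 2) F) =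
      !![d, -b; -c, a] := by
    rw [Matrix.SpecialLinearGroup.coe_inv, hg, Matrix.adjugate_fin_two_of]
  set P : Matrix (Fin 2) (Fin 2) F := ↑(u * (g⁻¹ * u * g)) with hP
  have hPmat : P = !![1, 0; 1, 1] * (!![d, -b; -c, a] * !![1, 0; 1, 1] * !![a, b; c, d]) := by
    simp only [hP, Matrix.SpecialLinearGroup.coe_mul, hu, hg, hginv]
  have hb : b ≠ 0 := fun hb ↦ hcomm <| commutatorElement_eq_one_iff_commute.mpr <|
    Subtype.ext (by simpa [hu, hg, hginv] using (Matrix.commute_unipotent_conj_of_eq_zero hb).eq)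
  refine ⟨hb, ?_⟩
  have htr : P.trace = b ^ 2 := by
    rw [hPmat, Matrix.trace_unipotent_mul_conj, CharTwo.two_eq_zero, zero_mul, zero_sub,
      CharTwo.neg_eq]
  set S := b⁻¹ • (P + 1) with hS
  have hSP : S ^ 2 = P := Matrix.sq_inv_smul_add_one_eq_self hb (u * (g⁻¹ * u * g)).2 htr
  have hSsq : S ^ 2 = b • S + 1 := by
    rw [hSP, hS, smul_smul, mul_inv_cancel₀ hb, one_smul, add_assoc, CharTwo.add_self_eq_zero,
      add_zero]
  have hexp : 2 * (k + 1) = Fintype.card F ^ 2 := by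
    have := Nat.one_le_pow 2 _ (Fintype.card_pos (α := F))
    omega
  have hPg : u * (g⁻¹ * u * g) * g⁻¹ = u * g⁻¹ * u := by group
  calc (((u * (g⁻¹ * u * g)) ^ (k + 1) * g⁻¹ : Matrix.SpecialLinearGroup (Fin 2) F) :
          Matrix (Fin 2) (Fin 2) F)
      = S ^ (Fintype.card F ^ 2) * ↑g⁻¹ := by
        rw [Matrix.SpecialLinearGroup.coe_mul, Matrix.SpecialLinearGroup.coe_pow, ← hP, ← hSP,
          ← pow_mul, hexp]
    _ = b⁻¹ • (↑(u * (g⁻¹ * u * g) * g⁻¹) + ↑g⁻¹) := by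
        rw [FiniteField.pow_card_sq_eq_self_of_sq_eq_smul_add_one hb hSsq, hS, smul_mul_assoc,
          add_mul, one_mul, Matrix.SpecialLinearGroup.coe_mul _ g⁻¹]
    _ = !![1, 0; 1 + (a + d) / b, 1] := by
        rw [hPg]
        simp only [Matrix.SpecialLinearGroup.coe_mul, hu, hginv]
        exact Matrix.inv_smul_unipotent_mul_adjugate_mul_unipotent_add hb

/-- For `u = !![1,0;1,1]` and `g = !![a,b;c,d]` in `SL(2, F₂ᵉ)` with `[u, uᵍ] ≠ 1`, writing
`q² - 1 = 2k + 1`, the element `B(g) = (u·uᵍ)^(k+1)·g⁻¹` equals `!![1,0; 1+(a+d)/b, 1]`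
and `b ≠ 0`. -/
theorem stmt_6 {F : Type*} [Field F] [Fintype F] (e : ℕ) (he : 0 < e)
    (hF : Fintype.card F = 2 ^ e) (k : ℕ) (hk : 2 * k + 1 = Fintype.card F ^ 2 - 1)
    (u g : Matrix.SpecialLinearGroup (Fin 2) F)
    (hu : (u : Matrix (Fin 2) (Fin 2) F) = !![1, 0; 1, 1])
    (a b c d : F) (hg : (g : Matrix (Fin 2) (Fin 2) F) = !![a, b; c, d])
    (hcomm : ⁅u, g⁻¹ * u * g⁆ ≠ 1) :
    b ≠ 0 ∧
      (((u * (g⁻¹ * u * g)) ^ (k + 1) * g⁻¹ : Matrix.SpecialLinearGroup (Fin 2) F) :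
          Matrix (Fin 2) (Fin 2) F) = !![1, 0; 1 + (a + d) / b, 1] :=
  stmt_6_general e hF k hk u g hu a b c d hg hcomm
end

section
/- Let F be a field of characteristic 2, let g = [[a,b],[c,d]] ∈ SL(2,F) with a, b, c, d, a+d, λ⁻²b+c all nonzero, and set A = (a+d)/b, B = (λ⁻²b+c)/a, C = (λ⁻²b+c)/d, D = (a+d)/(λ²c). Let Δ ∈ F satisfy Δ² = λ⁻²·A·D·(B+C)·(A+B+C+D). Then Δ ≠ 0 and a·Δ = A·C·D, b·Δ = D·(B+C), c·Δ = λ⁻²·A·(B+C), and d·Δ = A·B·D. -/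
/-!
Clearing denominators, `B + C = k(a+d)/(ad)` and `A + D = k(a+d)/(bc)` with `k = λ⁻²b + c`, so
`ad + bc = 1` gives `A + B + C + D = k(a+d)/(abcd)`. Hence the right-hand side of the equation for
`Δ²` is the square of `E = λ⁻²(a+d)²k/(abcd)`, and since squaring is injective in characteristic 2,
`Δ = E`. The four identities for `E` are then direct field computations.
-/

section
variable {F : Type*} [Field F] {a b c d l A B C D : F}

def recoveryScale (a b c d l : F) : F :=
  l⁻¹ ^ 2 * (a + d) ^ 2 * (l⁻¹ ^ 2 * b + c) / (a * b * c * d)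

theorem recoveryScale_ne_zero (hl : l ≠ 0) (ha : a ≠ 0) (hb : b ≠ 0) (hc : c ≠ 0) (hd : d ≠ 0)
    (had : a + d ≠ 0) (hbc : l⁻¹ ^ 2 * b + c ≠ 0) : recoveryScale a b c d l ≠ 0 := by
  have hl' : l⁻¹ ^ 2 ≠ 0 := pow_ne_zero 2 (inv_ne_zero hl)
  have habcd : a * b * c * d ≠ 0 := by simp [*]
  exact div_ne_zero (mul_ne_zero (mul_ne_zero hl' (pow_ne_zero 2 had)) hbc) habcd

theorem add_add_add_eq_of_det (hdet : a * d + b * c = 1) (hl : l ≠ 0)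
    (ha : a ≠ 0) (hb : b ≠ 0) (hc : c ≠ 0) (hd : d ≠ 0) :
    (a + d) / b + (l⁻¹ ^ 2 * b + c) / a + (l⁻¹ ^ 2 * b + c) / d + (a + d) / (l ^ 2 * c)
      = (a + d) * (l⁻¹ ^ 2 * b + c) / (a * b * c * d) := by
  field_simp
  linear_combination (a + d) * (b + l ^ 2 * c) * hdet

theorem recoveryScale_sq (hA : A = (a + d) / b) (hB : B = (l⁻¹ ^ 2 * b + c) / a)
    (hC : C = (l⁻¹ ^ 2 * b + c) / d) (hD : D = (a + d) / (l ^ 2 * c))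
    (hdet : a * d + b * c = 1) (hl : l ≠ 0) (ha : a ≠ 0) (hb : b ≠ 0) (hc : c ≠ 0) (hd : d ≠ 0) :
    recoveryScale a b c d l ^ 2 = l⁻¹ ^ 2 * A * D * (B + C) * (A + B + C + D) := by
  subst hA hB hC hD
  rw [add_add_add_eq_of_det hdet hl ha hb hc hd, recoveryScale]
  field_simp
  ring

theorem mul_recoveryScale (hA : A = (a + d) / b) (hB : B = (l⁻¹ ^ 2 * b + c) / a)
    (hC : C = (l⁻¹ ^ 2 * b + c) / d) (hD : D = (a + d) / (l ^ 2 * c))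
    (hl : l ≠ 0) (ha : a ≠ 0) (hb : b ≠ 0) (hc : c ≠ 0) (hd : d ≠ 0) :
    a * recoveryScale a b c d l = A * C * D ∧ b * recoveryScale a b c d l = D * (B + C) ∧
      c * recoveryScale a b c d l = l⁻¹ ^ 2 * A * (B + C) ∧
      d * recoveryScale a b c d l = A * B * D := by
  subst hA hB hC hD
  unfold recoveryScale
  refine ⟨?_, ?_, ?_, ?_⟩ <;> field_simp <;> ring

end

/-- Recovery of matrix entries: with `A, B, C, D` defined from `g = !![a,b;c,d] ∈ SL(2,F)`
and `Δ² = λ⁻²·A·D·(B+C)·(A+B+C+D)`, one has `Δ ≠ 0` and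
`a·Δ = A·C·D`, `b·Δ = D·(B+C)`, `c·Δ = λ⁻²·A·(B+C)`, `d·Δ = A·B·D`. -/
theorem stmt_9 {F : Type*} [Field F] [CharP F 2] (a b c d l : F)
    (hdet : a * d + b * c = 1) (hl : l ≠ 0)
    (ha : a ≠ 0) (hb : b ≠ 0) (hc : c ≠ 0) (hd : d ≠ 0)
    (had : a + d ≠ 0) (hbc : l⁻¹ ^ 2 * b + c ≠ 0)
    (A B C D : F)
    (hA : A = (a + d) / b) (hB : B = (l⁻¹ ^ 2 * b + c) / a)
    (hC : C = (l⁻¹ ^ 2 * b + c) / d) (hD : D = (a + d) / (l ^ 2 * c))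
    (Δ : F) (hΔ : Δ ^ 2 = l⁻¹ ^ 2 * A * D * (B + C) * (A + B + C + D)) :
    Δ ≠ 0 ∧ a * Δ = A * C * D ∧ b * Δ = D * (B + C) ∧
      c * Δ = l⁻¹ ^ 2 * A * (B + C) ∧ d * Δ = A * B * D := by
  have hΔE : Δ = recoveryScale a b c d l :=
    CharTwo.sq_inj.mp (hΔ.trans (recoveryScale_sq hA hB hC hD hdet hl ha hb hc hd).symm)
  subst hΔE
  exact ⟨recoveryScale_ne_zero hl ha hb hc hd had hbc, mul_recoveryScale hA hB hC hD hl ha hb hc hd⟩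
end

section
/- Let G = SL(2,F) with F = F_{2^e}, e ≥ 2, and let u = [[1,0],[1,1]]. Then an element g ∈ G satisfies [u, u^g] = 1 if and only if g normalizes the subgroup U = C_G(u) of lower unitriangular matrices. -/
open scoped commutatorElement

open Matrix

namespace Stmt14Aux

variable {F : Type*} [Field F]

lemma cent_iff (u n : SpecialLinearGroup (Fin 2) F)
    (hu : (u : Matrix (Fin 2) (Fin 2) F) = !![1, 0; 1, 1]) :
    n ∈ Subgroup.centralizer ({u} : Set (SpecialLinearGroup (Fin 2) F)) ↔
      (n : Matrix (Fin 2) (Fin 2) F) 0 1 = 0 ∧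
        (n : Matrix (Fin 2) (Fin 2) F) 0 0 = (n : Matrix (Fin 2) (Fin 2) F) 1 1 := by
  rw [Subgroup.mem_centralizer_singleton_iff]
  refine (Subtype.coe_inj (p := fun A : Matrix (Fin 2) (Fin 2) F => A.det = 1)).symm.trans ?_
  simp only [Matrix.SpecialLinearGroup.coe_mul]
  rw [hu, eta_fin_two (n : Matrix (Fin 2) (Fin 2) F), mul_fin_two, mul_fin_two,
    ← Matrix.ext_iff, Fin.forall_fin_two]
  simp only [Fin.forall_fin_two, cons_val', cons_val_zero, cons_val_one, head_cons, head_fin_const,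
    empty_val', cons_val_fin_one, of_apply]
  constructor
  · rintro ⟨⟨h00, _⟩, h10, _⟩
    exact ⟨by linear_combination h00, by linear_combination -h10⟩
  · rintro ⟨h1, h2⟩
    refine ⟨⟨by linear_combination h1, by ring⟩, by linear_combination -h2,
      by linear_combination -h1⟩

lemma conj_entry (g n : SpecialLinearGroup (Fin 2) F)
    (hb : (g : Matrix (Fin 2) (Fin 2) F) 0 1 = 0)
    (h1 : (n : Matrix (Fin 2) (Fin 2) F) 0 1 = 0)
    (h2 : (n : Matrix (Fin 2) (Fin 2) F) 0 0 = (n : Matrix (Fin 2) (Fin 2) F) 1 1) :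
    ((g * n * g⁻¹ : SpecialLinearGroup (Fin 2) F) : Matrix (Fin 2) (Fin 2) F) 0 1 = 0 ∧
      ((g * n * g⁻¹ : SpecialLinearGroup (Fin 2) F) : Matrix (Fin 2) (Fin 2) F) 0 0 =
        ((g * n * g⁻¹ : SpecialLinearGroup (Fin 2) F) : Matrix (Fin 2) (Fin 2) F) 1 1 := by
  simp only [Matrix.SpecialLinearGroup.coe_mul, Matrix.SpecialLinearGroup.coe_inv]
  rw [eta_fin_two (g : Matrix (Fin 2) (Fin 2) F), eta_fin_two (n : Matrix (Fin 2) (Fin 2) F),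
    adjugate_fin_two, mul_fin_two, mul_fin_two]
  simp only [cons_val', cons_val_zero, cons_val_one, head_cons, head_fin_const,
    empty_val', cons_val_fin_one, of_apply]
  rw [hb, h1, h2]
  constructor <;> ring

lemma comm_iff_b0 (u g : SpecialLinearGroup (Fin 2) F)
    (hu : (u : Matrix (Fin 2) (Fin 2) F) = !![1, 0; 1, 1]) :
    u * (g⁻¹ * u * g) = (g⁻¹ * u * g) * u ↔ (g : Matrix (Fin 2) (Fin 2) F) 0 1 = 0 := by
  refine (Subtype.coe_inj (p := fun A : Matrix (Fin 2) (Fin 2) F => A.det = 1)).symm.trans ?_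
  simp only [Matrix.SpecialLinearGroup.coe_mul, Matrix.SpecialLinearGroup.coe_inv]
  rw [hu, eta_fin_two (g : Matrix (Fin 2) (Fin 2) F), adjugate_fin_two,
    mul_fin_two, mul_fin_two, mul_fin_two, mul_fin_two, ← Matrix.ext_iff]
  simp only [Fin.forall_fin_two, cons_val', cons_val_zero, cons_val_one, head_cons,
    head_fin_const, empty_val', cons_val_fin_one, of_apply]
  constructor
  · rintro ⟨⟨h00, -⟩, -, -⟩
    have hb2 : ((g : Matrix (Fin 2) (Fin 2) F) 0 1) ^ 2 = 0 := by linear_combination h00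
    exact pow_eq_zero_iff (two_ne_zero).elim |>.mp hb2
  · intro hb
    rw [hb]
    refine ⟨⟨by ring, by ring⟩, by ring, by ring⟩

end Stmt14Aux

/-- In `G = SL(2, F₂ᵉ)` with `u = !![1,0;1,1]`: an element `g` satisfies `[u, uᵍ] = 1`
if and only if `g` normalizes `U = C_G(u)`. -/
theorem stmt_14 {F : Type*} [Field F] [Fintype F] (e : ℕ) (he : 2 ≤ e)
    (hF : Fintype.card F = 2 ^ e)
    (u g : Matrix.SpecialLinearGroup (Fin 2) F)
    (hu : (u : Matrix (Fin 2) (Fin 2) F) = !![1, 0; 1, 1]) :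
    ⁅u, g⁻¹ * u * g⁆ = 1 ↔
      g ∈ Subgroup.normalizer ((Subgroup.centralizer ({u} : Set (Matrix.SpecialLinearGroup (Fin 2) F)) : Set (Matrix.SpecialLinearGroup (Fin 2) F))) := by
  rw [commutatorElement_eq_one_iff_commute, commute_iff_eq,
    Stmt14Aux.comm_iff_b0 u g hu, Subgroup.mem_normalizer_iff]
  constructor
  · intro hb n
    rw [Stmt14Aux.cent_iff u n hu, Stmt14Aux.cent_iff u _ hu]
    constructor
    · intro hn
      exact Stmt14Aux.conj_entry g n hb hn.1 hn.2
    · intro hn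
      have hb' : ((g⁻¹ : Matrix.SpecialLinearGroup (Fin 2) F) :
          Matrix (Fin 2) (Fin 2) F) 0 1 = 0 := by
        rw [Matrix.SpecialLinearGroup.coe_inv, Matrix.eta_fin_two (g : Matrix (Fin 2) (Fin 2) F),
          Matrix.adjugate_fin_two]
        simp [hb]
      have h := Stmt14Aux.conj_entry g⁻¹ (g * n * g⁻¹) hb' hn.1 hn.2
      rwa [show g⁻¹ * (g * n * g⁻¹) * g⁻¹⁻¹ = n by group] at h
  · intro hg
    rw [← Stmt14Aux.comm_iff_b0 u g hu]
    have h2 := Subgroup.mem_centralizer_singleton_iff.mp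
      ((hg u).mp (Subgroup.mem_centralizer_singleton_iff.mpr rfl))
    rw [show u * (g⁻¹ * u * g) = g⁻¹ * ((g * u * g⁻¹) * u) * g by group,
      show (g⁻¹ * u * g) * u = g⁻¹ * (u * (g * u * g⁻¹)) * g by group, h2]
end

section
/- Let F be a finite field of order 2^e and let c₁, ..., c_n ∈ F be such that the subfields F₂[c_i] have pairwise coprime multiplicative group orders (i.e., the numbers 2^{d_i} − 1 are pairwise coprime, where d_i = [F₂[c_i] : F₂]), and suppose the c_i together generate F as a field, with all c_i ≠ 0. Then s := c₁·c₂·⋯·c_n satisfies F₂[s] = F. -/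
/-!
The order of `cᵢ ≠ 0` divides `|F₂[cᵢ]ˣ| = 2^{dᵢ} - 1`, so the orders of the `cᵢ` are pairwise
coprime. Then every `cᵢ` is a power of `s = ∏ cᵢ`, hence lies in `F₂[s]`, and `F₂[s] = F`.
-/

open Finset Function

/-- For infinite `G₀` this holds because `Nat.card G₀ = 0`. -/
theorem orderOf_dvd_natCard_sub_one {G₀ : Type*} [GroupWithZero G₀] {x : G₀} (hx : x ≠ 0) :
    orderOf x ∣ Nat.card G₀ - 1 := by
  have := orderOf_dvd_natCard (Units.mk0 x hx)
  rwa [← orderOf_units, Units.val_mk0, Nat.card_units] at this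

theorem Subfield.orderOf_dvd_natCard_sub_one {F : Type*} [Field F] {K : Subfield F} {x : F}
    (hxK : x ∈ K) (hx : x ≠ 0) : orderOf x ∣ Nat.card K - 1 := by
  have hx' : (⟨x, hxK⟩ : K) ≠ 0 := by simpa [← Subtype.val_inj] using hx
  have := _root_.orderOf_dvd_natCard_sub_one hx'
  rwa [← orderOf_injective (K.subtype : K →* F) Subtype.val_injective] at this

theorem prod_pow_prod_orderOf_erase {M : Type*} [CommMonoid M] {ι : Type*} [DecidableEq ι]
    {s : Finset ι} {i : ι} (hi : i ∈ s) (c : ι → M) :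
    (∏ j ∈ s, c j) ^ (∏ j ∈ s.erase i, orderOf (c j)) =
      c i ^ (∏ j ∈ s.erase i, orderOf (c j)) := by
  rw [← prod_pow]
  refine prod_eq_single_of_mem i hi fun j hj hji => ?_
  exact orderOf_dvd_iff_pow_eq_one.mp (dvd_prod_of_mem _ (mem_erase.mpr ⟨hji, hj⟩))

/-- Raising `∏ c` to the product of the other orders isolates `c i`, and that exponent is
invertible modulo `orderOf (c i)`. -/
theorem exists_pow_prod_eq_of_pairwise_coprime {M : Type*} [CommMonoid M] {ι : Type*}
    {s : Finset ι} {c : ι → M}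
    (hcop : (s : Set ι).Pairwise (Nat.Coprime on fun j => orderOf (c j))) {i : ι} (hi : i ∈ s) :
    ∃ k, (∏ j ∈ s, c j) ^ k = c i := by
  classical
  have hM : (∏ j ∈ s.erase i, orderOf (c j)).Coprime (orderOf (c i)) :=
    Nat.Coprime.prod_left fun j hj => hcop (mem_erase.mp hj).2 hi (mem_erase.mp hj).1
  obtain ⟨m, hm⟩ := exists_pow_eq_self_of_coprime hM
  exact ⟨_ * m, by rw [pow_mul, prod_pow_prod_orderOf_erase hi, hm]⟩

theorem Subfield.closure_singleton_prod_eq_closure_range {F : Type*} [Field F] {ι : Type*}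
    [Fintype ι] {c : ι → F} (hcop : Pairwise (Nat.Coprime on fun i => orderOf (c i))) :
    closure {∏ i, c i} = closure (Set.range c) := by
  apply le_antisymm
  · rw [closure_le, Set.singleton_subset_iff]
    exact prod_mem fun i _ => subset_closure (Set.mem_range_self i)
  · rw [closure_le]
    rintro _ ⟨i, rfl⟩
    obtain ⟨k, hk⟩ := exists_pow_prod_eq_of_pairwise_coprime (s := univ)
      (fun i _ j _ hij => hcop hij) (mem_univ i)
    rw [← hk]
    exact pow_mem (subset_closure (Set.mem_singleton _)) k

theorem stmt_16_general {F : Type*} [Field F] (n : ℕ) (c : Fin n → F)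
    (hc0 : ∀ i, c i ≠ 0)
    (hcop : ∀ i j, i ≠ j →
      Nat.Coprime (Nat.card (Subfield.closure {c i}) - 1)
        (Nat.card (Subfield.closure {c j}) - 1))
    (hgen : Subfield.closure (Set.range c) = ⊤) :
    Subfield.closure {∏ i, c i} = (⊤ : Subfield F) := by
  have horder (i) : orderOf (c i) ∣ Nat.card (Subfield.closure {c i}) - 1 :=
    Subfield.orderOf_dvd_natCard_sub_one (Subfield.subset_closure (Set.mem_singleton _)) (hc0 i)
  rw [Subfield.closure_singleton_prod_eq_closure_range
    fun i j hij => ((hcop i j hij).coprime_dvd_left (horder i)).coprime_dvd_right (horder j), hgen]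

/-- If the subfields `F₂[cᵢ]` of `F = F₂ᵉ` have pairwise coprime multiplicative group
orders, the `cᵢ` are nonzero and together generate `F`, then `s = ∏ cᵢ` generates `F`. -/
theorem stmt_16 {F : Type*} [Field F] [Fintype F] (e : ℕ) (he : 0 < e)
    (hF : Fintype.card F = 2 ^ e) (n : ℕ) (c : Fin n → F)
    (hc0 : ∀ i, c i ≠ 0)
    (hcop : ∀ i j, i ≠ j →
      Nat.Coprime (Nat.card (Subfield.closure {c i}) - 1)
        (Nat.card (Subfield.closure {c j}) - 1))
    (hgen : Subfield.closure (Set.range c) = ⊤) :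
    Subfield.closure {∏ i, c i} = (⊤ : Subfield F) :=
  stmt_16_general n c hc0 hcop hgen
end
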